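/- Let 𝔛 be a countable set, let t ≥ 1, and let g : 𝔛^t → ℝ^c be a permutation-invariant function, i.e. g(f^{π(1)}, …, f^{π(t)}) = g(f^1, …, f^t) for every permutation π of {1, …, t}. Then g can be decomposed as g(f^1, …, f^t) = β(∑_{j=1}^t γ(f^j)) for suitable functions γ : 𝔛 → ℝ and β : ℝ → ℝ^c. -/

import Mathlib

/-! Send each element of `𝔛` to the logarithm of its own prime. A sum `∑ j, γ (f j)` is then the
logarithm of a product of primes, which by unique factorization determines the multiset of the
entries of `f`; permutation invariance says exactly that `g f` depends only on that multiset. -/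

open Finset Function

section

variable {ι α : Type*} [Fintype ι]

theorem exists_perm_comp_eq_of_map_univ_eq {f f' : ι → α}
    (h : univ.val.map f = univ.val.map f') : ∃ σ : Equiv.Perm ι, f ∘ σ = f' := by
  classical
  have hfiber : ∀ a, Nonempty ({i // f' i = a} ≃ {i // f i = a}) := fun a =>
    Fintype.card_eq.mp <| by
      simpa [Fintype.card_subtype, Finset.card, Multiset.count_map, eq_comm] using
        (congrArg (Multiset.count a) h).symm
  let e a := (hfiber a).some
  -- glue the fibrewise bijections into one permutation of `ι`
  refine ⟨(Equiv.sigmaFiberEquiv f').symm.trans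
      ((Equiv.sigmaCongrRight e).trans (Equiv.sigmaFiberEquiv f)),
    funext fun i => (e (f' i) ⟨i, rfl⟩).2⟩

theorem factorsThrough_map_univ_of_perm_invariant {β : Type*} {g : (ι → α) → β}
    (hg : ∀ (f : ι → α) (σ : Equiv.Perm ι), g (f ∘ σ) = g f) :
    g.FactorsThrough fun f => univ.val.map f := fun f f' h => by
  obtain ⟨σ, rfl⟩ := exists_perm_comp_eq_of_map_univ_eq h
  exact (hg f σ).symm

theorem map_univ_eq_of_prod_eq {p : α → ℕ} (hp : Injective p) (hprime : ∀ a, (p a).Prime)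
    {f f' : ι → α} (h : ∏ i, p (f i) = ∏ i, p (f' i)) : univ.val.map f = univ.val.map f' := by
  have hfactors : ∀ f : ι → α, UniqueFactorizationMonoid.normalizedFactors (∏ i, p (f i)) =
      (univ.val.map f).map p := fun f => by
    rw [Multiset.map_map, ← prod_map_val]
    refine UniqueFactorizationMonoid.normalizedFactors_prod_of_prime fun q hq => ?_
    obtain ⟨i, -, rfl⟩ := Multiset.mem_map.mp hq
    exact (hprime (f i)).prime
  exact Multiset.map_injective hp (by rw [← hfactors, ← hfactors, h])

theorem map_univ_eq_of_sum_log_eq {p : α → ℕ} (hp : Injective p) (hprime : ∀ a, (p a).Prime)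
    {f f' : ι → α} (h : ∑ i, Real.log (p (f i)) = ∑ i, Real.log (p (f' i))) :
    univ.val.map f = univ.val.map f' := by
  have hlog : ∀ f : ι → α, ∑ i, Real.log (p (f i)) = Real.log (∏ i, p (f i) : ℕ) := fun f => by
    rw [Nat.cast_prod, Real.log_prod fun i _ => by exact_mod_cast (hprime (f i)).ne_zero]
  refine map_univ_eq_of_prod_eq hp hprime (Nat.cast_injective (R := ℝ) ?_)
  refine Real.log_injOn_pos ?_ ?_ (by rw [← hlog, ← hlog, h])
  all_goals exact Set.mem_Ioi.mpr (by exact_mod_cast prod_pos fun i _ => (hprime _).pos)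

end

theorem exists_injective_prime (α : Type*) [Countable α] :
    ∃ p : α → ℕ, Injective p ∧ ∀ a, (p a).Prime := by
  obtain ⟨e, he⟩ := Countable.exists_injective_nat α
  exact ⟨Nat.nth Nat.Prime ∘ e, (Nat.nth_strictMono Nat.infinite_setOfPred_prime).injective.comp he,
    fun a => Nat.prime_nth_prime (e a)⟩

theorem perm_invariant_decomposition_general
    {𝔛 : Type*} [Countable 𝔛] (t c : ℕ)
    (g : (Fin t → 𝔛) → (Fin c → ℝ))
    (hg : ∀ (f : Fin t → 𝔛) (π : Equiv.Perm (Fin t)),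
      g (fun j => f (π j)) = g f) :
    ∃ (γ : 𝔛 → ℝ) (β : ℝ → (Fin c → ℝ)),
      ∀ f : Fin t → 𝔛, g f = β (∑ j, γ (f j)) := by
  obtain ⟨p, hp, hprime⟩ := exists_injective_prime 𝔛
  have hfactors : g.FactorsThrough fun f => ∑ j, Real.log (p (f j)) := fun f f' h =>
    factorsThrough_map_univ_of_perm_invariant hg (map_univ_eq_of_sum_log_eq hp hprime h)
  exact ⟨fun x => Real.log (p x), extend _ g 0, fun f => (hfactors.extend_apply 0 f).symm⟩

/-- Deep Sets: on a countable set 𝔛, every permutation-invariant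
function `g : 𝔛^t → ℝ^c` decomposes as `g(f^1,…,f^t) = β(∑_j γ(f^j))`
for suitable `γ : 𝔛 → ℝ` and `β : ℝ → ℝ^c`. -/
theorem perm_invariant_decomposition
    {𝔛 : Type*} [Countable 𝔛] (t c : ℕ) (ht : 1 ≤ t)
    (g : (Fin t → 𝔛) → (Fin c → ℝ))
    (hg : ∀ (f : Fin t → 𝔛) (π : Equiv.Perm (Fin t)),
      g (fun j => f (π j)) = g f) :
    ∃ (γ : 𝔛 → ℝ) (β : ℝ → (Fin c → ℝ)),
      ∀ f : Fin t → 𝔛, g f = β (∑ j, γ (f j)) :=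
  perm_invariant_decomposition_general t c g hg
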